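/- Let λ = (k^m) be the rectangular partition of size m × k (m rows, each of length k, with m, k ≥ 1) and suppose |λ| = mk is even. Then the Newell–Littlewood coefficient N^λ_{λλ} is at least 1. (This is the combinatorial content of the proposition that the representation ⊗³ detects the subgroup 𝕊_{∥λ∥}(G) of GL_N for G of type B_n, C_n, or D_{2n} when λ is a rectangular partition of an even number.) -/

import Mathlib

/-- A partition: a weakly decreasing finite sequence (list) of positive
integers. -/
def IsPartition (l : List ℕ) : Prop :=
  l.Pairwise (· ≥ ·) ∧ ∀ x ∈ l, 0 < x

/-- The `i`-th part (0-indexed) of a partition, `0` beyond its length. -/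
def part (l : List ℕ) (i : ℕ) : ℕ := l.getD i 0

/-- Cell `(i, j)` (row `i`, column `j`, both 0-indexed) lies in the skew
Young diagram `ν/λ`. -/
def InSkew (nu lam : List ℕ) (i j : ℕ) : Prop :=
  part lam i ≤ j ∧ j < part nu i

/-- Cell `(i, j)` comes weakly before cell `(r, c)` in the reverse reading
order: rows are read top to bottom, and each row is read right to left. -/
def ReadingLE (i j r c : ℕ) : Prop := i < r ∨ (i = r ∧ c ≤ j)

/-- `T` is a Littlewood–Richardson tableau of shape `ν/λ` and content `μ`:
`λ ⊆ ν`, the entries of `T` are positive exactly on the cells of the skew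
diagram `ν/λ`, entries weakly increase from left to right along rows,
entries strictly increase from top to bottom down columns, for every `j ≥ 1`
the entry `j` occurs exactly `μ_j` times, and the reverse reading word is a
lattice word: every prefix contains at least as many occurrences of `j` as
of `j + 1`, for every `j ≥ 1`. -/
structure IsLRTableau (nu lam mu : List ℕ) (T : ℕ → ℕ → ℕ) : Prop where
  subset : ∀ i, part lam i ≤ part nu i
  support : ∀ i j, 0 < T i j ↔ InSkew nu lam i j
  row_weak : ∀ i j j', InSkew nu lam i j → InSkew nu lam i j' → j ≤ j' →
    T i j ≤ T i j'
  col_strict : ∀ i i' j, InSkew nu lam i j → InSkew nu lam i' j → i < i' →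
    T i j < T i' j
  content : ∀ k : ℕ, {p : ℕ × ℕ | T p.1 p.2 = k + 1}.ncard = part mu k
  lattice : ∀ r c k : ℕ,
    {p : ℕ × ℕ | T p.1 p.2 = k + 2 ∧ ReadingLE p.1 p.2 r c}.ncard ≤
    {p : ℕ × ℕ | T p.1 p.2 = k + 1 ∧ ReadingLE p.1 p.2 r c}.ncard

/-- The Littlewood–Richardson coefficient `c^ν_{λμ}`: the number of
Littlewood–Richardson tableaux of shape `ν/λ` and content `μ`. -/
noncomputable def lrCoeff (nu lam mu : List ℕ) : ℕ :=
  {T : ℕ → ℕ → ℕ | IsLRTableau nu lam mu T}.ncard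

/-- The Newell–Littlewood coefficient
`N^ν_{λμ} = Σ_{α,β,γ} c^λ_{αβ} · c^μ_{αγ} · c^ν_{βγ}`, the sum running over
all triples of partitions `(α, β, γ)` (only finitely many terms are
nonzero). -/
noncomputable def nlCoeff (lam mu nu : List ℕ) : ℕ :=
  ∑ᶠ x : {l : List ℕ // IsPartition l} × {l : List ℕ // IsPartition l} ×
      {l : List ℕ // IsPartition l},
    lrCoeff lam x.1.val x.2.1.val * lrCoeff mu x.1.val x.2.2.val *
      lrCoeff nu x.2.1.val x.2.2.val

/-!
If `m = 2t`, let `A = (k^t)` be the top half of the rectangle `λ = (k^m)`; filling the bottom half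
so that its `i`-th row consists of the entries `i + 1` gives a Littlewood–Richardson tableau of
shape `λ/A` and content `A`. If `k = 2t`, the same filling of the right half works for the left
half `A = (t^m)`. Hence `c^λ_{AA} ≥ 1`, and the term `(α, β, γ) = (A, A, A)` of the
Newell–Littlewood sum is `(c^λ_{AA})^3 ≥ 1`.

Both steps need finiteness, because `lrCoeff` is an `ncard` and `nlCoeff` a `finsum` (each `0`
on infinite sets/supports): an LR tableau of outer shape `ν` lives in a box determined by `ν`, and
this bounds its entries, its inner shape and its content.
-/

open Finset

theorem part_replicate (n v i : ℕ) :
    part (List.replicate n v) i = if i < n then v else 0 := by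
  split_ifs with h
  · exact List.getD_replicate v h
  · exact List.getD_eq_default _ _ (by simpa using h)

theorem part_eq_getElem {l : List ℕ} {i : ℕ} (h : i < l.length) : part l i = l[i] :=
  List.getD_eq_getElem _ _ h

theorem part_eq_zero {l : List ℕ} {i : ℕ} (h : l.length ≤ i) : part l i = 0 :=
  List.getD_eq_default _ _ h

theorem part_le_sum (l : List ℕ) (i : ℕ) : part l i ≤ l.sum := by
  rcases lt_or_ge i l.length with h | h
  · rw [part_eq_getElem h]
    exact List.le_sum_of_mem (List.getElem_mem h)
  · rw [part_eq_zero h]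
    exact Nat.zero_le _

theorem IsPartition.part_pos {l : List ℕ} (hl : IsPartition l) {i : ℕ} (h : i < l.length) :
    0 < part l i := by
  rw [part_eq_getElem h]
  exact hl.2 _ (List.getElem_mem h)

theorem isPartition_replicate (n : ℕ) {v : ℕ} (hv : 0 < v) :
    IsPartition (List.replicate n v) :=
  ⟨List.pairwise_replicate.mpr (Or.inr le_rfl), fun _ hx => List.eq_of_mem_replicate hx ▸ hv⟩

def boundingBox (nu : List ℕ) : Finset (ℕ × ℕ) := range nu.length ×ˢ range nu.sum

theorem card_boundingBox (nu : List ℕ) : #(boundingBox nu) = nu.length * nu.sum := by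
  simp [boundingBox]

namespace IsLRTableau

variable {nu lam mu : List ℕ} {T : ℕ → ℕ → ℕ}

theorem mem_boundingBox (hT : IsLRTableau nu lam mu T) {i j : ℕ} (h : T i j ≠ 0) :
    (i, j) ∈ boundingBox nu := by
  have hij := ((hT.support i j).mp (Nat.pos_of_ne_zero h)).2
  have hi : i < nu.length := by
    by_contra hi
    rw [part_eq_zero (not_lt.mp hi)] at hij
    exact Nat.not_lt_zero _ hij
  simpa [boundingBox] using ⟨hi, hij.trans_le (part_le_sum nu i)⟩

theorem levelSet_subset_boundingBox (hT : IsLRTableau nu lam mu T) (v : ℕ) :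
    {p : ℕ × ℕ | T p.1 p.2 = v + 1} ⊆ boundingBox nu :=
  fun _ hp => hT.mem_boundingBox (ne_of_eq_of_ne hp (Nat.succ_ne_zero v))

theorem levelSet_finite (hT : IsLRTableau nu lam mu T) (v : ℕ) :
    {p : ℕ × ℕ | T p.1 p.2 = v + 1}.Finite :=
  (boundingBox nu).finite_toSet.subset (hT.levelSet_subset_boundingBox v)

theorem part_content_le (hT : IsLRTableau nu lam mu T) (v : ℕ) :
    part mu v ≤ nu.length * nu.sum := by
  rw [← hT.content v, ← card_boundingBox, ← Set.ncard_coe_finset]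
  exact Set.ncard_le_ncard (hT.levelSet_subset_boundingBox v) (boundingBox nu).finite_toSet

theorem le_length_content (hT : IsLRTableau nu lam mu T) (i j : ℕ) : T i j ≤ mu.length := by
  by_contra! hlt
  obtain ⟨v, hv⟩ : ∃ v, T i j = v + 1 := ⟨T i j - 1, by omega⟩
  have hempty := hT.content v
  rw [part_eq_zero (by omega), Set.ncard_eq_zero (hT.levelSet_finite v)] at hempty
  exact hempty.subset (show (i, j) ∈ {p : ℕ × ℕ | T p.1 p.2 = v + 1} from hv)

theorem length_le (hT : IsLRTableau nu lam mu T) (hlam : IsPartition lam) :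
    lam.length ≤ nu.length := by
  by_contra! hlt
  have := (hlam.part_pos hlt).trans_le (hT.subset nu.length)
  rw [part_eq_zero le_rfl] at this
  exact Nat.lt_irrefl 0 this

theorem le_sum_of_mem (hT : IsLRTableau nu lam mu T) {x : ℕ} (hx : x ∈ lam) : x ≤ nu.sum := by
  obtain ⟨i, hi, rfl⟩ := List.getElem_of_mem hx
  rw [← part_eq_getElem hi]
  exact (hT.subset i).trans (part_le_sum nu i)

theorem le_of_mem_content (hT : IsLRTableau nu lam mu T) {x : ℕ} (hx : x ∈ mu) :
    x ≤ nu.length * nu.sum := by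
  obtain ⟨v, hv, rfl⟩ := List.getElem_of_mem hx
  rw [← part_eq_getElem hv]
  exact hT.part_content_le v

theorem length_content_le (hT : IsLRTableau nu lam mu T) (hmu : IsPartition mu) :
    mu.length ≤ nu.length * nu.sum := by
  have hsub : range mu.length ⊆ (boundingBox nu).image (fun p => T p.1 p.2 - 1) := by
    intro v hv
    have hpos : 0 < {p : ℕ × ℕ | T p.1 p.2 = v + 1}.ncard :=
      hT.content v ▸ hmu.part_pos (mem_range.mp hv)
    obtain ⟨p, hp⟩ := Set.nonempty_of_ncard_ne_zero hpos.ne'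
    have hTp : T p.1 p.2 = v + 1 := hp
    exact mem_image.mpr ⟨p, hT.levelSet_subset_boundingBox v hp, by rw [hTp, Nat.add_sub_cancel]⟩
  calc mu.length = #(range mu.length) := (card_range _).symm
    _ ≤ #(boundingBox nu) := (card_le_card hsub).trans card_image_le
    _ = nu.length * nu.sum := card_boundingBox nu

end IsLRTableau

theorem setOf_isLRTableau_finite (nu lam mu : List ℕ) :
    {T : ℕ → ℕ → ℕ | IsLRTableau nu lam mu T}.Finite := by
  let restrict (T : ℕ → ℕ → ℕ) (p : boundingBox nu) : ℕ := T p.1.1 p.1.2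
  refine Set.Finite.of_finite_image (f := restrict) ?_ ?_
  · refine (Set.Finite.pi (t := fun _ => Set.Iic mu.length) fun _ => Set.finite_Iic _).subset ?_
    rintro _ ⟨T, hT, rfl⟩ p -
    exact hT.le_length_content _ _
  · intro T hT T' hT' h
    funext i j
    by_cases hij : (i, j) ∈ boundingBox nu
    · exact congrFun h ⟨(i, j), hij⟩
    · rw [not_imp_comm.mp hT.mem_boundingBox hij, not_imp_comm.mp hT'.mem_boundingBox hij]

theorem one_le_lrCoeff {nu lam mu : List ℕ} {T : ℕ → ℕ → ℕ} (hT : IsLRTableau nu lam mu T) :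
    1 ≤ lrCoeff nu lam mu :=
  Nat.one_le_iff_ne_zero.mpr <|
    (Set.ncard_pos (setOf_isLRTableau_finite nu lam mu)).mpr ⟨T, hT⟩ |>.ne'

def boundedLists (N : ℕ) : Set (List ℕ) := {l | l.length ≤ N ∧ ∀ x ∈ l, x ≤ N}

theorem boundedLists_finite (N : ℕ) : (boundedLists N).Finite := by
  refine ((List.finite_length_le (Fin (N + 1)) N).image (List.map Fin.val)).subset ?_
  rintro l ⟨hlen, hle⟩
  refine ⟨l.attach.map fun x => ⟨x.1, Nat.lt_succ_of_le (hle x.1 x.2)⟩, by simpa using hlen, ?_⟩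
  simp [List.map_map, Function.comp_def]

def sizeBound (nu : List ℕ) : ℕ := nu.length * nu.sum + nu.length + nu.sum

theorem IsLRTableau.mem_boundedLists {nu lam mu : List ℕ} {T : ℕ → ℕ → ℕ}
    (hT : IsLRTableau nu lam mu T) (hlam : IsPartition lam) (hmu : IsPartition mu) :
    lam ∈ boundedLists (sizeBound nu) ∧ mu ∈ boundedLists (sizeBound nu) := by
  unfold sizeBound
  refine ⟨⟨?_, fun x hx => ?_⟩, ⟨?_, fun x hx => ?_⟩⟩
  · have := hT.length_le hlam; omega
  · have := hT.le_sum_of_mem hx; omega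
  · have := hT.length_content_le hmu; omega
  · have := hT.le_of_mem_content hx; omega

theorem mem_boundedLists_of_lrCoeff_ne_zero {nu lam mu : List ℕ} (hlam : IsPartition lam)
    (hmu : IsPartition mu) (h : lrCoeff nu lam mu ≠ 0) :
    lam ∈ boundedLists (sizeBound nu) ∧ mu ∈ boundedLists (sizeBound nu) := by
  obtain ⟨T, hT⟩ := Set.nonempty_of_ncard_ne_zero h
  exact hT.mem_boundedLists hlam hmu

theorem lrCoeff_mul_le_nlCoeff (lam mu nu : List ℕ) (a b c : {l : List ℕ // IsPartition l}) :
    lrCoeff lam a b * lrCoeff mu a c * lrCoeff nu b c ≤ nlCoeff lam mu nu := by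
  unfold nlCoeff
  refine single_le_finsum (a, b, c) (f := fun x =>
      lrCoeff lam x.1 x.2.1 * lrCoeff mu x.1 x.2.2 * lrCoeff nu x.2.1 x.2.2)
    ?_ fun _ => Nat.zero_le _
  let P (N : ℕ) : Set {l : List ℕ // IsPartition l} := Subtype.val ⁻¹' boundedLists N
  have hP (N : ℕ) : (P N).Finite :=
    (boundedLists_finite N).preimage Subtype.val_injective.injOn
  refine ((hP (sizeBound lam)).prod ((hP (sizeBound lam)).prod (hP (sizeBound mu)))).subset ?_
  rintro ⟨x, y, z⟩ hxyz
  have hxy : lrCoeff lam x y ≠ 0 := fun h => hxyz (by simp [h])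
  have hxz : lrCoeff mu x z ≠ 0 := fun h => hxyz (by simp [h])
  exact ⟨(mem_boundedLists_of_lrCoeff_ne_zero x.2 y.2 hxy).1,
    (mem_boundedLists_of_lrCoeff_ne_zero x.2 y.2 hxy).2,
    (mem_boundedLists_of_lrCoeff_ne_zero x.2 z.2 hxz).2⟩

def rowFilling (m k r c : ℕ) (i j : ℕ) : ℕ :=
  if r ≤ i ∧ i < m ∧ c ≤ j ∧ j < k then i - r + 1 else 0

section rowFilling

variable {m k r c : ℕ}

theorem rowFilling_eq_succ_iff {i j v : ℕ} :
    rowFilling m k r c i j = v + 1 ↔ i = r + v ∧ r + v < m ∧ c ≤ j ∧ j < k := by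
  unfold rowFilling
  split_ifs with h
  · omega
  · exact iff_of_false id fun ⟨h1, h2, h3, h4⟩ => h ⟨by omega, by omega, h3, h4⟩

theorem setOf_rowFilling_eq_succ (v : ℕ) :
    {p : ℕ × ℕ | rowFilling m k r c p.1 p.2 = v + 1} =
      if r + v < m then ↑({r + v} ×ˢ Ico c k) else ∅ := by
  ext ⟨i, j⟩
  simp only [Set.mem_ofPred_eq, rowFilling_eq_succ_iff]
  split_ifs with h
  · simp only [coe_product, Set.mem_prod, coe_singleton, Set.mem_singleton_iff, coe_Ico,
      Set.mem_Ico]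
    tauto
  · simp only [Set.mem_empty_iff_false, iff_false]
    omega

/-- `hA` says `A = (k^r, c^(m-r))`; it is phrased through `part`, which ignores trailing zeros,
so that `c = 0` allows `A = (k^r)`. -/
theorem isLRTableau_rowFilling {n w : ℕ} {A : List ℕ} (hn : r + n = m) (hw : c + w = k)
    (hA : ∀ i, part A i = if i < r then k else if i < m then c else 0) :
    IsLRTableau (List.replicate m k) A (List.replicate n w) (rowFilling m k r c) := by
  have hskew (i j : ℕ) :
      InSkew (List.replicate m k) A i j ↔ r ≤ i ∧ i < m ∧ c ≤ j ∧ j < k := by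
    rw [InSkew, hA, part_replicate]
    split_ifs <;> omega
  have hlevel_finite (v : ℕ) : {p : ℕ × ℕ | rowFilling m k r c p.1 p.2 = v + 1}.Finite := by
    rw [setOf_rowFilling_eq_succ]
    split_ifs
    exacts [finite_toSet _, Set.finite_empty]
  refine ⟨fun i => ?_, fun i j => ?_, fun i j j' hj hj' _ => ?_, fun i i' j hi hi' hlt => ?_,
    fun v => ?_, fun r' c' v => ?_⟩
  · rw [hA, part_replicate]
    split_ifs <;> omega
  · rw [hskew, rowFilling]
    split_ifs <;> omega
  · rw [hskew] at hj hj'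
    rw [rowFilling, rowFilling, if_pos hj, if_pos hj']
  · rw [hskew] at hi hi'
    rw [rowFilling, rowFilling, if_pos hi, if_pos hi']
    omega
  · rw [setOf_rowFilling_eq_succ, part_replicate]
    split_ifs <;>
      simp only [Set.ncard_coe_finset, card_product, card_singleton, Nat.card_Ico,
        Set.ncard_empty] <;>
      omega
  -- Each entry `v + 2` sits directly below an entry `v + 1`, which is read earlier.
  · refine Set.ncard_le_ncard_of_injOn (fun p => (p.1 - 1, p.2)) ?_ ?_
      ((hlevel_finite v).subset fun _ hp => hp.1)
    · rintro ⟨i, j⟩ ⟨hi, hread⟩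
      replace hi := rowFilling_eq_succ_iff (v := v + 1) |>.mp hi
      refine ⟨rowFilling_eq_succ_iff.mpr (by omega), ?_⟩
      unfold ReadingLE at hread ⊢
      omega
    · rintro ⟨i, j⟩ ⟨hi, -⟩ ⟨i', j'⟩ ⟨hi', -⟩ h
      replace hi := rowFilling_eq_succ_iff (v := v + 1) |>.mp hi
      replace hi' := rowFilling_eq_succ_iff (v := v + 1) |>.mp hi'
      simp only [Prod.mk.injEq] at h ⊢
      omega

end rowFilling

theorem one_le_nlCoeff_self_of_isLRTableau {lam A : List ℕ} {T : ℕ → ℕ → ℕ}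
    (hA : IsPartition A) (hT : IsLRTableau lam A A T) : 1 ≤ nlCoeff lam lam lam :=
  have h := one_le_lrCoeff hT
  calc 1 ≤ lrCoeff lam A A * lrCoeff lam A A * lrCoeff lam A A := one_le_mul (one_le_mul h h) h
    _ ≤ nlCoeff lam lam lam := lrCoeff_mul_le_nlCoeff lam lam lam ⟨A, hA⟩ ⟨A, hA⟩ ⟨A, hA⟩

theorem one_le_nlCoeff_rectangular_general (m k : ℕ) (hk : 1 ≤ k)
    (h : Even (m * k)) :
    1 ≤ nlCoeff (List.replicate m k) (List.replicate m k)
        (List.replicate m k) := by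
  rcases Nat.even_mul.mp h with ⟨t, rfl⟩ | ⟨t, rfl⟩
  · refine one_le_nlCoeff_self_of_isLRTableau (isPartition_replicate t hk)
      (isLRTableau_rowFilling (r := t) (c := 0) rfl (Nat.zero_add k) fun i => ?_)
    rw [part_replicate]
    split_ifs <;> omega
  · refine one_le_nlCoeff_self_of_isLRTableau (isPartition_replicate m (by omega : 0 < t))
      (isLRTableau_rowFilling (r := 0) (c := t) (Nat.zero_add m) rfl fun i => ?_)
    rw [part_replicate]
    split_ifs <;> omega

/-- For a rectangular partition `λ = (k^m)` with `mk` even,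
`N^λ_{λλ} ≥ 1`; equivalently, `⊗³` detects `𝕊_{∥λ∥}(G)` in this case. -/
theorem one_le_nlCoeff_rectangular (m k : ℕ) (hm : 1 ≤ m) (hk : 1 ≤ k)
    (h : Even (m * k)) :
    1 ≤ nlCoeff (List.replicate m k) (List.replicate m k)
        (List.replicate m k) :=
  one_le_nlCoeff_rectangular_general m k hk h
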